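/- Let k be an integer with k ≥ 2 and ΛQ(y) = 2k·y^k/(1 + y^{2k}). There exists a constant C > 0, depending only on k, such that for all scales 0 < λ_in ≤ λ_out: (1/(λ_in·λ_out))·∫_0^∞ ΛQ(r/λ_in)·ΛQ(r/λ_out)·r dr ≤ C·(λ_in/λ_out)^{k−1}. -/

import Mathlib

/-!
Bounding the inner bubble by its tail, `ΛQ(r/λ_in) ≤ 2k (λ_in/r)^k`, and keeping the outer bubble
exactly, the integrand is at most `4k² (λ_in/λ_out)^k λ_out H(r/λ_out)` with
`H(s) = s/(1 + s^{2k})`. Since `2k > 2`, `H` is integrable on `(0, ∞)`, and rescaling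
`r = λ_out s` leaves `4k² (λ_in/λ_out)^k λ_out² ∫ H`, so `C = 4k² ∫ H` works.
-/

open MeasureTheory

/-- `ΛQ(y) = y Q'(y) = 2k y^k/(1+y^{2k})`. -/
noncomputable def LamQ (k : ℕ) (y : ℝ) : ℝ := 2 * k * y ^ k / (1 + y ^ (2 * k))

open Set

lemma LamQ_nonneg (k : ℕ) {y : ℝ} (hy : 0 ≤ y) : 0 ≤ LamQ k y := by
  unfold LamQ; positivity

lemma LamQ_le_div_pow (k : ℕ) {y : ℝ} (hy : 0 < y) : LamQ k y ≤ 2 * k / y ^ k := by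
  unfold LamQ
  rw [div_le_div_iff₀ (by positivity) (by positivity), mul_assoc, ← pow_add, ← two_mul]
  have : (0 : ℝ) ≤ 2 * k := by positivity
  nlinarith

lemma LamQ_mul_LamQ_mul_le (k : ℕ) {a b r : ℝ} (ha : 0 < a) (hb : 0 < b) (hr : 0 < r) :
    LamQ k (r / a) * LamQ k (r / b) * r
      ≤ 4 * k ^ 2 * (a / b) ^ k * b * ((r / b) / (1 + (r / b) ^ (2 * k))) := by
  have hb' : 0 ≤ LamQ k (r / b) := LamQ_nonneg k (by positivity)
  calc LamQ k (r / a) * LamQ k (r / b) * r ≤ 2 * k / (r / a) ^ k * LamQ k (r / b) * r := by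
        gcongr
        exact LamQ_le_div_pow k (by positivity)
    _ = 4 * k ^ 2 * (a / b) ^ k * b * ((r / b) / (1 + (r / b) ^ (2 * k))) := by
        simp only [LamQ, div_pow]
        field_simp
        ring

lemma continuousOn_div_one_add_pow (n : ℕ) :
    ContinuousOn (fun s : ℝ => s / (1 + s ^ n)) (Ici 0) :=
  continuousOn_id.div (by fun_prop) fun s (hs : 0 ≤ s) => by positivity

lemma div_one_add_pow_le_rpow (n : ℕ) {s : ℝ} (hs : 0 < s) :
    s / (1 + s ^ n) ≤ s ^ ((1 : ℝ) - n) := by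
  rw [Real.rpow_sub hs, Real.rpow_one, Real.rpow_natCast]
  gcongr
  linarith

lemma integrableOn_Ioi_div_one_add_pow {n : ℕ} (hn : 2 < n) :
    IntegrableOn (fun s : ℝ => s / (1 + s ^ n)) (Ioi 0) := by
  rw [← Ioc_union_Ioi_eq_Ioi zero_le_one]
  refine IntegrableOn.union ?_ ?_
  · exact ((continuousOn_div_one_add_pow n).mono Icc_subset_Ici_self).integrableOn_Icc.mono_set
      Ioc_subset_Icc_self
  · have hexp : (1 : ℝ) - n < -1 := by
      have : (2 : ℝ) < n := by exact_mod_cast hn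
      linarith
    have hmeas : AEStronglyMeasurable (fun s : ℝ => s / (1 + s ^ n)) (volume.restrict (Ioi 1)) :=
      ((continuousOn_div_one_add_pow n).mono fun s (hs : 1 < s) => zero_le_one.trans hs.le)
        |>.aestronglyMeasurable measurableSet_Ioi
    refine (integrableOn_Ioi_rpow_of_lt hexp zero_lt_one).mono' hmeas ?_
    refine (ae_restrict_iff' measurableSet_Ioi).2 (ae_of_all _ fun s (hs : 1 < s) => ?_)
    have hs0 : 0 < s := zero_lt_one.trans hs
    rw [Real.norm_of_nonneg (by positivity)]
    exact div_one_add_pow_le_rpow n hs0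

lemma setIntegral_Ioi_div_one_add_pow_pos {n : ℕ} (hn : 2 < n) :
    0 < ∫ s in Ioi (0 : ℝ), s / (1 + s ^ n) := by
  have hpos : ∀ s ∈ Ioi (0 : ℝ), 0 < s / (1 + s ^ n) := fun s (hs : 0 < s) => by positivity
  rw [setIntegral_pos_iff_support_of_nonneg_ae
    ((ae_restrict_iff' measurableSet_Ioi).2 (ae_of_all _ fun s hs => (hpos s hs).le))
    (integrableOn_Ioi_div_one_add_pow hn),
    inter_eq_right.2 fun s hs => Function.mem_support.2 (hpos s hs).ne']
  simp

lemma integrableOn_Ioi_div_one_add_pow_comp_div {n : ℕ} (hn : 2 < n) {b : ℝ} (hb : 0 < b) :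
    IntegrableOn (fun r : ℝ => (r / b) / (1 + (r / b) ^ n)) (Ioi 0) := by
  simpa [div_eq_mul_inv] using
    (integrableOn_Ioi_comp_mul_right_iff (fun s : ℝ => s / (1 + s ^ n)) 0 (inv_pos.2 hb)).2
      (by simpa using integrableOn_Ioi_div_one_add_pow hn)

lemma setIntegral_Ioi_div_one_add_pow_comp_div (n : ℕ) {b : ℝ} (hb : 0 < b) :
    ∫ r in Ioi (0 : ℝ), (r / b) / (1 + (r / b) ^ n)
      = b * ∫ s in Ioi (0 : ℝ), s / (1 + s ^ n) := by
  simpa [div_eq_mul_inv] using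
    integral_comp_mul_right_Ioi (fun s : ℝ => s / (1 + s ^ n)) 0 (inv_pos.2 hb)

lemma setIntegral_LamQ_mul_LamQ_mul_le {k : ℕ} (hk : 1 < k) {a b : ℝ} (ha : 0 < a)
    (hb : 0 < b) :
    ∫ r in Ioi (0 : ℝ), LamQ k (r / a) * LamQ k (r / b) * r
      ≤ 4 * k ^ 2 * (a / b) ^ k * b ^ 2 * ∫ s in Ioi (0 : ℝ), s / (1 + s ^ (2 * k)) := by
  have hn : 2 < 2 * k := by omega
  calc ∫ r in Ioi (0 : ℝ), LamQ k (r / a) * LamQ k (r / b) * r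
      ≤ ∫ r in Ioi (0 : ℝ),
          4 * k ^ 2 * (a / b) ^ k * b * ((r / b) / (1 + (r / b) ^ (2 * k))) := by
        refine integral_mono_of_nonneg ?_
          ((integrableOn_Ioi_div_one_add_pow_comp_div hn hb).const_mul _) ?_
        · refine (ae_restrict_iff' measurableSet_Ioi).2 (ae_of_all _ fun r (hr : 0 < r) => ?_)
          have := LamQ_nonneg k (div_nonneg hr.le ha.le)
          have := LamQ_nonneg k (div_nonneg hr.le hb.le)
          positivity
        · exact (ae_restrict_iff' measurableSet_Ioi).2
            (ae_of_all _ fun r hr => LamQ_mul_LamQ_mul_le k ha hb hr)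
    _ = 4 * k ^ 2 * (a / b) ^ k * b ^ 2 * ∫ s in Ioi (0 : ℝ), s / (1 + s ^ (2 * k)) := by
        rw [integral_const_mul, setIntegral_Ioi_div_one_add_pow_comp_div _ hb]
        ring

/-- Inter-bubble interaction estimate: for `k ≥ 2` there exists `C = C(k) > 0` such that
for all scales `0 < λ_in ≤ λ_out`,
`(λ_in λ_out)⁻¹ ∫₀^∞ ΛQ(r/λ_in) ΛQ(r/λ_out) r dr ≤ C (λ_in/λ_out)^{k-1}`. -/
theorem stmt_8 (k : ℕ) (hk : 2 ≤ k) :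
    ∃ C > (0 : ℝ), ∀ lin lout : ℝ, 0 < lin → lin ≤ lout →
      (1 / (lin * lout)) *
          ∫ r in Set.Ioi (0 : ℝ), LamQ k (r / lin) * LamQ k (r / lout) * r
        ≤ C * (lin / lout) ^ (k - 1) := by
  set J := ∫ s in Ioi (0 : ℝ), s / (1 + s ^ (2 * k))
  have hJ : 0 < J := setIntegral_Ioi_div_one_add_pow_pos (by omega)
  have hk0 : (0 : ℝ) < k := by exact_mod_cast (by omega : 0 < k)
  refine ⟨4 * k ^ 2 * J, by positivity, fun lin lout hlin hle => ?_⟩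
  have hlout : 0 < lout := hlin.trans_le hle
  calc (1 / (lin * lout)) * ∫ r in Ioi (0 : ℝ), LamQ k (r / lin) * LamQ k (r / lout) * r
      ≤ (1 / (lin * lout)) * (4 * k ^ 2 * (lin / lout) ^ k * lout ^ 2 * J) := by
        gcongr
        exact setIntegral_LamQ_mul_LamQ_mul_le hk hlin hlout
    _ = 4 * k ^ 2 * J * (lin / lout) ^ (k - 1) := by
        rw [← pow_sub_one_mul (by omega : k ≠ 0)]
        field_simp
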